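/- If G has an efficient dominating set, then for any graph H, γ_R(G ⊠ H) ≥ γ(G)·γ_R(H), where G ⊠ H is the strong product. -/

import Mathlib

open Finset

/-- A set `S` is a dominating set of `G` if every vertex outside `S` has a neighbor in `S`. -/
def IsDominatingSet {V : Type*} (G : SimpleGraph V) (S : Set V) : Prop :=
  ∀ v, v ∉ S → ∃ u ∈ S, G.Adj u v

/-- The domination number `γ(G)`. -/
noncomputable def domNum {V : Type*} [Fintype V] (G : SimpleGraph V) : ℕ :=
  sInf {n | ∃ S : Finset V, IsDominatingSet G ↑S ∧ S.card = n}

/-- A Roman dominating function: values in {0,1,2}, every vertex of value 0 has a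
neighbor of value 2. -/
def IsRDF {V : Type*} (G : SimpleGraph V) (f : V → ℕ) : Prop :=
  (∀ v, f v ≤ 2) ∧ ∀ v, f v = 0 → ∃ u, G.Adj u v ∧ f u = 2

/-- The Roman domination number `γ_R(G)`. -/
noncomputable def romanDomNum {V : Type*} [Fintype V] (G : SimpleGraph V) : ℕ :=
  sInf {n | ∃ f : V → ℕ, IsRDF G f ∧ ∑ v, f v = n}

/-- The strong product of graphs. -/
def strongProd {V W : Type*} (G : SimpleGraph V) (H : SimpleGraph W) :
    SimpleGraph (V × W) where
  Adj x y := x ≠ y ∧ (x.1 = y.1 ∨ G.Adj x.1 y.1) ∧ (x.2 = y.2 ∨ H.Adj x.2 y.2)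
  symm := ⟨fun x y => by
    rintro ⟨h, h1, h2⟩
    refine ⟨h.symm, ?_, ?_⟩
    · cases h1 with
      | inl h => exact Or.inl h.symm
      | inr h => exact Or.inr h.symm
    · cases h2 with
      | inl h => exact Or.inl h.symm
      | inr h => exact Or.inr h.symm⟩
  loopless := ⟨fun x => by simp⟩

/-- `G` has an efficient dominating set: a dominating set whose elements have
pairwise disjoint closed neighborhoods. -/
def HasEfficientDomSet {V : Type*} (G : SimpleGraph V) : Prop :=
  ∃ S : Finset V, IsDominatingSet G ↑S ∧
    ∀ u ∈ S, ∀ v ∈ S, u ≠ v →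
      Disjoint (insert u (G.neighborSet u)) (insert v (G.neighborSet v))

/-!
Let `D` be an efficient dominating set of `G`, so `|D| ≥ γ(G)` and the closed neighbourhoods
`N[d]`, `d ∈ D`, are pairwise disjoint. Given a Roman dominating function `f` of `G ⊠ H`,
collapsing the layer `N[d] × V(H)` onto `H` by `w ↦ min 2 (∑_{v ∈ N[d]} f (v, w))` gives a
Roman dominating function of `H`: a vertex `(d, w)` of weight `0` is dominated by some `(u, x)` with
`u ∈ N[d]`. Each layer therefore carries weight at least `γ_R(H)`, and the layers are disjoint.
-/

section Domination

variable {V : Type*} [Fintype V] {G : SimpleGraph V}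

theorem domNum_le_card {S : Finset V} (hS : IsDominatingSet G S) : domNum G ≤ S.card :=
  Nat.sInf_le ⟨S, hS, rfl⟩

theorem romanDomNum_le_sum {f : V → ℕ} (hf : IsRDF G f) : romanDomNum G ≤ ∑ v, f v :=
  Nat.sInf_le ⟨f, hf, rfl⟩

theorem exists_isRDF_sum_eq_romanDomNum (G : SimpleGraph V) :
    ∃ f, IsRDF G f ∧ ∑ v, f v = romanDomNum G :=
  Nat.sInf_mem (s := {n | ∃ f : V → ℕ, IsRDF G f ∧ ∑ v, f v = n})
    ⟨_, fun _ => 2, ⟨fun _ => le_rfl, fun _ h => absurd h two_ne_zero⟩, rfl⟩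

end Domination

section StrongProduct

variable {V W : Type*} {G : SimpleGraph V} {H : SimpleGraph W}

theorem IsRDF.min_two_sum_closedNeighborFinset [DecidableEq V] {d : V}
    [Fintype (G.neighborSet d)] {f : V × W → ℕ} (hf : IsRDF (strongProd G H) f) :
    IsRDF H fun w => min 2 (∑ v ∈ insert d (G.neighborFinset d), f (v, w)) := by
  refine ⟨fun w => min_le_left _ _, fun w hw => ?_⟩
  have hzero : ∀ v ∈ insert d (G.neighborFinset d), f (v, w) = 0 :=
    sum_eq_zero_iff.mp ((Nat.min_eq_zero_iff.mp hw).resolve_left two_ne_zero)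
  obtain ⟨⟨u, x⟩, ⟨-, hud, hxw⟩, hux⟩ := hf.2 (d, w) (hzero d (mem_insert_self _ _))
  have hu : u ∈ insert d (G.neighborFinset d) := by
    rcases hud with rfl | hud
    · exact mem_insert_self _ _
    · exact mem_insert_of_mem ((G.mem_neighborFinset _ _).mpr hud.symm)
  rcases hxw with rfl | hxw
  · exact absurd (hzero u hu) (by simp [hux])
  · refine ⟨x, hxw, min_eq_left ?_⟩
    calc 2 = f (u, x) := hux.symm
      _ ≤ ∑ v ∈ insert d (G.neighborFinset d), f (v, x) :=
        single_le_sum (f := fun v => f (v, x)) (fun _ _ => Nat.zero_le _) hu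

theorem romanDomNum_le_sum_closedNeighborFinset [Fintype W] [DecidableEq V] {d : V}
    [Fintype (G.neighborSet d)] {f : V × W → ℕ} (hf : IsRDF (strongProd G H) f) :
    romanDomNum H ≤ ∑ v ∈ insert d (G.neighborFinset d), ∑ w, f (v, w) :=
  calc romanDomNum H ≤ ∑ w, min 2 (∑ v ∈ insert d (G.neighborFinset d), f (v, w)) :=
        romanDomNum_le_sum hf.min_two_sum_closedNeighborFinset
    _ ≤ ∑ w, ∑ v ∈ insert d (G.neighborFinset d), f (v, w) :=
        sum_le_sum fun _ _ => min_le_right _ _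
    _ = _ := sum_comm

theorem card_mul_romanDomNum_le_romanDomNum_strongProd [Fintype V] [Fintype W] {D : Finset V}
    (hD : (D : Set V).PairwiseDisjoint fun d => insert d (G.neighborSet d)) :
    D.card * romanDomNum H ≤ romanDomNum (strongProd G H) := by
  classical
  obtain ⟨f, hf, hsum⟩ := exists_isRDF_sum_eq_romanDomNum (strongProd G H)
  set N : V → Finset V := fun d => insert d (G.neighborFinset d)
  have hN : (D : Set V).PairwiseDisjoint N := fun u hu v hv huv => by
    simpa [N, Function.onFun, ← disjoint_coe] using hD hu hv huv
  calc D.card * romanDomNum H = ∑ _d ∈ D, romanDomNum H := by rw [sum_const, smul_eq_mul]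
    _ ≤ ∑ d ∈ D, ∑ v ∈ N d, ∑ w, f (v, w) :=
        sum_le_sum fun _ _ => romanDomNum_le_sum_closedNeighborFinset hf
    _ = ∑ v ∈ D.biUnion N, ∑ w, f (v, w) := (sum_biUnion hN).symm
    _ ≤ ∑ v, ∑ w, f (v, w) := sum_le_sum_of_subset (subset_univ _)
    _ = romanDomNum (strongProd G H) := by rw [← Fintype.sum_prod_type', hsum]

end StrongProduct

theorem stmt18 {V W : Type*} [Fintype V] [Fintype W]
    (G : SimpleGraph V) (H : SimpleGraph W) (hG : HasEfficientDomSet G) :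
    romanDomNum (strongProd G H) ≥ domNum G * romanDomNum H := by
  obtain ⟨D, hdom, hdisj⟩ := hG
  calc domNum G * romanDomNum H ≤ D.card * romanDomNum H :=
        Nat.mul_le_mul_right _ (domNum_le_card hdom)
    _ ≤ romanDomNum (strongProd G H) :=
        card_mul_romanDomNum_le_romanDomNum_strongProd fun _ hu _ hv => hdisj _ hu _ hv
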